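/- Let R : [0,∞) → [0,∞) be nonnegative and integrable with ∫₀^∞ t R(t) dt < ∞, and let m ≥ 0, Q_A ∈ [0,1]. For T > 0 and v ≥ 0 define E(T,v) = Q_A·m·(Tv + ∫₀^{Tv} s R(Tv−s) ds). Then for every b > 0, sup_{v ∈ [0,b]} | T⁻¹ E(T,v) − v m Q_A (‖R‖_{L¹} + 1) | → 0 as T → ∞. -/

import Mathlib

/-!
Write `L = ∫₀^∞ R`. Since `A R(u) - min(u, A) R(u)` is `(A - u) R(u)` for `u ≤ A` and vanishes
for `u > A`, the substitution `u = A - s` gives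
`∫₀^A s R(A - s) ds = A L - ∫₀^∞ min(u, A) R(u) du`. With `A = T v` the error
`T⁻¹ E(T, v) - v m Q_A (L + 1)` is therefore `-T⁻¹ Q_A m ∫₀^∞ min(u, T v) R(u) du`, and since
`|min(u, A)| ≤ u` it is at most `T⁻¹ |Q_A m| ∫₀^∞ |u R(u)| du`, uniformly in `v`.
-/

open MeasureTheory Set Filter

section TruncatedMoment

variable {R : ℝ → ℝ} {A : ℝ}

lemma norm_min_mul_le_norm_mul {u : ℝ} (hu : 0 ≤ u) (hA : 0 ≤ A) :
    ‖min u A * R u‖ ≤ ‖u * R u‖ := by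
  rw [norm_mul, norm_mul]
  gcongr
  rw [Real.norm_of_nonneg (le_min hu hA), Real.norm_of_nonneg hu]
  exact min_le_left u A

lemma ae_norm_min_mul_le (hA : 0 ≤ A) :
    ∀ᵐ u ∂volume.restrict (Ioi (0:ℝ)), ‖min u A * R u‖ ≤ ‖u * R u‖ :=
  ae_restrict_of_forall_mem measurableSet_Ioi fun _ hu => norm_min_mul_le_norm_mul hu.le hA

lemma integrableOn_min_mul (hRint : IntegrableOn R (Ioi 0))
    (hRmom : IntegrableOn (fun t => t * R t) (Ioi 0)) (hA : 0 ≤ A) :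
    IntegrableOn (fun u => min u A * R u) (Ioi 0) :=
  hRmom.norm.mono' ((continuous_id.min continuous_const).aestronglyMeasurable.mul
    hRint.aestronglyMeasurable) (ae_norm_min_mul_le hA)

lemma norm_integral_min_mul_le (hRmom : IntegrableOn (fun t => t * R t) (Ioi 0)) (hA : 0 ≤ A) :
    ‖∫ u in Ioi 0, min u A * R u‖ ≤ ∫ t in Ioi 0, ‖t * R t‖ :=
  norm_integral_le_of_norm_le hRmom.norm (ae_norm_min_mul_le hA)

lemma integral_Ioc_mul_comp_sub (hA : 0 ≤ A) :
    ∫ s in Ioc 0 A, s * R (A - s) = ∫ u in Ioc 0 A, (A - u) * R u := by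
  rw [← intervalIntegral.integral_of_le hA, ← intervalIntegral.integral_of_le hA]
  simpa only [sub_sub_cancel, sub_self, sub_zero] using
    intervalIntegral.integral_comp_sub_left (a := 0) (b := A) (fun u => (A - u) * R u) A

lemma integral_Ioc_mul_comp_sub_eq (hRint : IntegrableOn R (Ioi 0))
    (hRmom : IntegrableOn (fun t => t * R t) (Ioi 0)) (hA : 0 ≤ A) :
    ∫ s in Ioc 0 A, s * R (A - s) = A * (∫ t in Ioi 0, R t) - ∫ u in Ioi 0, min u A * R u := by
  have hpointwise : (fun u => A * R u - min u A * R u) =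
      (Iic A).indicator (fun u => (A - u) * R u) := by
    ext u
    by_cases hu : u ≤ A
    · simp [indicator_of_mem (mem_Iic.2 hu), min_eq_left hu, sub_mul]
    · simp [indicator_of_notMem (fun h : u ∈ Iic A => hu h), min_eq_right (le_of_not_ge hu)]
  rw [integral_Ioc_mul_comp_sub hA, ← integral_const_mul,
    ← integral_sub (hRint.const_mul A) (integrableOn_min_mul hRint hRmom hA), hpointwise,
    setIntegral_indicator measurableSet_Iic, Ioi_inter_Iic]

end TruncatedMoment

theorem mean_LLN_uniform_general
    (R : ℝ → ℝ) (hRint : IntegrableOn R (Ioi 0))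
    (hRmom : IntegrableOn (fun t => t * R t) (Ioi 0))
    (m QA : ℝ)
    (E : ℝ → ℝ → ℝ)
    (hE : ∀ T > 0, ∀ v ≥ 0,
      E T v = QA * m * (T * v + ∫ s in Ioc (0:ℝ) (T * v), s * R (T * v - s))) :
    ∀ b > 0,
      Tendsto
        (fun T => ⨆ v : Icc (0:ℝ) b,
          |T⁻¹ * E T v - (v : ℝ) * m * QA * ((∫ t in Ioi (0:ℝ), R t) + 1)|)
        atTop (nhds 0) := by
  intro b hb
  have : Nonempty (Icc (0:ℝ) b) := ⟨⟨0, le_rfl, hb.le⟩⟩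
  set M := ∫ t in Ioi (0:ℝ), ‖t * R t‖
  have herror : ∀ T > 0, ∀ v ≥ 0,
      T⁻¹ * E T v - v * m * QA * ((∫ t in Ioi (0:ℝ), R t) + 1) =
        -(T⁻¹ * (QA * m * ∫ u in Ioi 0, min u (T * v) * R u)) := by
    intro T hT v hv
    rw [hE T hT v hv, integral_Ioc_mul_comp_sub_eq hRint hRmom (mul_nonneg hT.le hv)]
    field_simp
    ring
  have hbound : ∀ T > 0, ∀ v ≥ 0,
      |T⁻¹ * E T v - v * m * QA * ((∫ t in Ioi (0:ℝ), R t) + 1)| ≤ T⁻¹ * (|QA * m| * M) := by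
    intro T hT v hv
    rw [herror T hT v hv, abs_neg, abs_mul, abs_mul, abs_of_pos (inv_pos.2 hT)]
    gcongr
    exact norm_integral_min_mul_le hRmom (mul_nonneg hT.le hv)
  refine squeeze_zero' (Eventually.of_forall fun T => Real.iSup_nonneg fun _ => abs_nonneg _) ?_
    (by simpa only [zero_mul] using tendsto_inv_atTop_zero.mul_const (|QA * m| * M))
  filter_upwards [eventually_gt_atTop 0] with T hT
  exact ciSup_le fun v => hbound T hT v v.2.1

theorem mean_LLN_uniform
    (R : ℝ → ℝ) (hRmeas : Measurable R) (hRpos : ∀ t, 0 ≤ R t)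
    (hRint : IntegrableOn R (Ioi 0))
    (hRmom : IntegrableOn (fun t => t * R t) (Ioi 0))
    (m QA : ℝ) (hm : 0 ≤ m) (hQA : QA ∈ Icc (0:ℝ) 1)
    (E : ℝ → ℝ → ℝ)
    (hE : ∀ T > 0, ∀ v ≥ 0,
      E T v = QA * m * (T * v + ∫ s in Ioc (0:ℝ) (T * v), s * R (T * v - s))) :
    ∀ b > 0,
      Tendsto
        (fun T => ⨆ v : Icc (0:ℝ) b,
          |T⁻¹ * E T v - (v : ℝ) * m * QA * ((∫ t in Ioi (0:ℝ), R t) + 1)|)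
        atTop (nhds 0) :=
  mean_LLN_uniform_general R hRint hRmom m QA E hE
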